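/- The cdf vector F(x) = (F₀(x), F₁(x)) with F₀(x) = π₀ + α₁(1-c)e^{z₁x}, F₁(x) = π₁ + α₁ c e^{z₁x} (where π₀ = 1/(1+χ), π₁ = χ/(1+χ), α₁ = -χ/(c(1+χ)), z₁ = χ/c - 1/(1-c)) satisfies the differential equation F'(x) D = F(x) M componentwise, where D = diag(-cμ, (1-c)μ) and M = [[-λ, λ], [μ, -μ]], χ = λ/μ. -/

import Mathlib

/-!
The solution is the stationary distribution `π` plus one exponential mode. Since `π M = 0`
(the balance equation `λ π₀ = μ π₁`), the constant part drops out, and the mode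
`e^{z₁ x} (1 - c, c)` solves `F' D = F M` because `(1 - c, c)` is a left eigenvector of
`M D⁻¹` for the eigenvalue `z₁`.
-/

open Real

theorem deriv_const_add_mul_exp_mul (p a z x : ℝ) :
    deriv (fun x => p + a * exp (z * x)) x = a * z * exp (z * x) := by
  have hexp : HasDerivAt (fun x => exp (z * x)) (exp (z * x) * z) x :=
    ((hasDerivAt_id x).const_mul z).exp.congr_deriv (by simp)
  rw [((hexp.const_mul a).const_add p).deriv]
  ring

theorem stmt_13_general (lam mu c : ℝ) (hmu : 0 < mu)
    (hc0 : 0 < c) (hc1 : c < 1)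
    (chi z1 alpha1 pi0 pi1 : ℝ) (hchi : chi = lam / mu)
    (hz1 : z1 = chi / c - 1 / (1 - c))
    (hpi0 : pi0 = 1 / (1 + chi)) (hpi1 : pi1 = chi / (1 + chi))
    (F0 F1 : ℝ → ℝ)
    (hF0 : ∀ x, F0 x = pi0 + alpha1 * (1 - c) * Real.exp (z1 * x))
    (hF1 : ∀ x, F1 x = pi1 + alpha1 * c * Real.exp (z1 * x)) :
    ∀ x : ℝ,
      deriv F0 x * (-(c * mu)) = F0 x * (-lam) + F1 x * mu ∧
      deriv F1 x * ((1 - c) * mu) = F0 x * lam + F1 x * (-mu) := by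
  intro x
  have hlam : lam = chi * mu := by rw [hchi, div_mul_cancel₀ _ hmu.ne']
  have hbalance : lam * pi0 = mu * pi1 := by
    rw [hpi0, hpi1, hlam]
    ring
  have hmode : z1 * (c * (1 - c)) = chi * (1 - c) - c := by
    have : 1 - c ≠ 0 := sub_ne_zero.mpr hc1.ne'
    rw [hz1]
    field_simp [hc0.ne']
  rw [funext hF0, funext hF1, deriv_const_add_mul_exp_mul, deriv_const_add_mul_exp_mul]
  constructor
  · linear_combination (-(alpha1 * mu * exp (z1 * x))) * hmode + hbalance
      + (alpha1 * (1 - c) * exp (z1 * x)) * hlam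
  · linear_combination (alpha1 * mu * exp (z1 * x)) * hmode - hbalance
      - (alpha1 * (1 - c) * exp (z1 * x)) * hlam

theorem stmt_13 (lam mu c : ℝ) (hlam : 0 < lam) (hmu : 0 < mu)
    (hc0 : 0 < c) (hc1 : c < 1)
    (chi z1 alpha1 pi0 pi1 : ℝ) (hchi : chi = lam / mu)
    (hz1 : z1 = chi / c - 1 / (1 - c))
    (halpha : alpha1 = -chi / (c * (1 + chi)))
    (hpi0 : pi0 = 1 / (1 + chi)) (hpi1 : pi1 = chi / (1 + chi))
    (F0 F1 : ℝ → ℝ)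
    (hF0 : ∀ x, F0 x = pi0 + alpha1 * (1 - c) * Real.exp (z1 * x))
    (hF1 : ∀ x, F1 x = pi1 + alpha1 * c * Real.exp (z1 * x)) :
    ∀ x : ℝ,
      deriv F0 x * (-(c * mu)) = F0 x * (-lam) + F1 x * mu ∧
      deriv F1 x * ((1 - c) * mu) = F0 x * lam + F1 x * (-mu) :=
  stmt_13_general lam mu c hmu hc0 hc1 chi z1 alpha1 pi0 pi1 hchi hz1 hpi0 hpi1 F0 F1 hF0 hF1
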